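/- Quasi-matrix multiplication in the ideal M̃^(1): for all a,b,i,j,k,l,p,q ∈ {S,A}, Ĝ^(1)_{[ab][ij]} Ĝ^(1)_{[kl][pq]} = δ_{ik} δ_{jl} b_{ij} Ĝ^(1)_{[ab][pq]}, where the Gram coefficients are b_{SS} = (d+2)/(4d), b_{SA} = b_{AS} = 1/4, b_{AA} = (d−2)/(4d). Equivalently, Q^(1) (E_i⊗E_j) Q^(1) = b_{ij} Q^(1) for all i,j ∈ {S,A}. -/

import Mathlib

open Matrix Kronecker

namespace WBA

/-- Configurations of `p` qudits of local dimension `d`. -/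
abbrev Conf (d p : ℕ) := Fin p → Fin d

/-- Operators on `H = (ℂ^d)^{⊗ 2p}`, indexed by pairs (unprimed configuration, primed
configuration). -/
abbrev Op (d p : ℕ) := Matrix (Conf d p × Conf d p) (Conf d p × Conf d p) ℂ

/-- The projector `P⁺_{a,c'}` onto the maximally entangled state between unprimed system `a`
and primed system `c`, tensored with the identity elsewhere. -/
noncomputable def Pplus (d p : ℕ) (a c : Fin p) : Op d p :=
  Matrix.of fun xy uv =>
    if xy.1 a = xy.2 c ∧ uv.1 a = uv.2 c ∧ (∀ j, j ≠ a → xy.1 j = uv.1 j) ∧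
        (∀ j, j ≠ c → xy.2 j = uv.2 j) then
      (d : ℂ)⁻¹
    else 0

/-- `d • P⁺_{a,c'}`, i.e. the partially transposed swap `V^{t_{c'}}_{(a,c')}`. -/
noncomputable def arc (d p : ℕ) (a c : Fin p) : Op d p := (d : ℂ) • Pplus d p a c

/-- `V^(k) = ∏_{j=p-k+1}^{p} (d • P⁺_{j,j'})` (product over the last `k` systems;
`V^(0) = 1`). -/
noncomputable def Vop (d p k : ℕ) : Op d p :=
  (((List.range p).filter (fun j => decide (p - k ≤ j))).map
    (fun j => if h : j < p then arc d p ⟨j, h⟩ ⟨j, h⟩ else 1)).prod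

/-- `Q^(p) = d^{-p} V^(p)` and `Q^(k) = d^{-k} V^(k) - d^{-(k+1)} V^(k+1)` for `k < p`. -/
noncomputable def Qop (d p k : ℕ) : Op d p :=
  if k = p then ((d : ℂ) ^ p)⁻¹ • Vop d p p
  else ((d : ℂ) ^ k)⁻¹ • Vop d p k - ((d : ℂ) ^ (k + 1))⁻¹ • Vop d p (k + 1)

/-- Permutation matrix on `(ℂ^d)^{⊗ n}`: sends `e_v` to `e_{v ∘ σ⁻¹}`. -/
noncomputable def permMat (d n : ℕ) (σ : Equiv.Perm (Fin n)) :
    Matrix (Fin n → Fin d) (Fin n → Fin d) ℂ :=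
  Matrix.of fun x u => if x = u ∘ ⇑σ⁻¹ then 1 else 0

/-- `V_σ`: permutation of the unprimed factors, identity on the primed factors. -/
noncomputable def VL (d p : ℕ) (σ : Equiv.Perm (Fin p)) : Op d p :=
  (permMat d p σ) ⊗ₖ (1 : Matrix (Conf d p) (Conf d p) ℂ)

/-- `V'_τ`: permutation of the primed factors, identity on the unprimed factors. -/
noncomputable def VR (d p : ℕ) (τ : Equiv.Perm (Fin p)) : Op d p :=
  (1 : Matrix (Conf d p) (Conf d p) ℂ) ⊗ₖ (permMat d p τ)

/-- Identification of `H` with `(ℂ^d)^{⊗ (p+p)}`. -/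
def glue (d p : ℕ) : (Conf d p × Conf d p) ≃ (Fin (p + p) → Fin d) :=
  (Equiv.sumArrowEquivProdArrow (Fin p) (Fin p) (Fin d)).symm.trans
    (Equiv.arrowCongr finSumFinEquiv (Equiv.refl (Fin d)))

/-- The permutation operator `W_π`, `π ∈ S_{2p}`, permuting all `2p` tensor factors of `H`. -/
noncomputable def Wfull (d p : ℕ) (π : Equiv.Perm (Fin (p + p))) : Op d p :=
  (permMat d (p + p) π).submatrix (glue d p) (glue d p)

/-- Partial transpose over the `p` primed factors:
`⟨x,y|M^Γ|u,v⟩ = ⟨x,v|M|u,y⟩`. -/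
noncomputable def ptrans (d p : ℕ) (M : Op d p) : Op d p :=
  Matrix.of fun xy uv => M (xy.1, uv.2) (uv.1, xy.2)

/-- The algebra `A^d_{p,p}` of partially transposed permutation operators, as a
linear subspace of `End(H)`. -/
noncomputable def Apt (d p : ℕ) : Submodule ℂ (Op d p) :=
  Submodule.span ℂ {M | ∃ π : Equiv.Perm (Fin (p + p)), M = ptrans d p (Wfull d p π)}

/-- Extension of an operator on systems `1,…,p-r,1',…,(p-r)'` by the identity on the
remaining systems. -/
noncomputable def embed (d p r : ℕ) (M : Op d (p - r)) : Op d p :=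
  Matrix.of fun xy uv =>
    M (xy.1 ∘ Fin.castLE (Nat.sub_le p r), xy.2 ∘ Fin.castLE (Nat.sub_le p r))
      (uv.1 ∘ Fin.castLE (Nat.sub_le p r), uv.2 ∘ Fin.castLE (Nat.sub_le p r)) *
    (if ∀ j : Fin p, p - r ≤ (j : ℕ) → xy.1 j = uv.1 j ∧ xy.2 j = uv.2 j then 1 else 0)

/-- The ideal `M̃^(k) = span{ V_σ V'_τ Q^(k) V_π V'_ρ }` of `A^d_{p,p}`. -/
noncomputable def Mtil (d p k : ℕ) : Submodule ℂ (Op d p) :=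
  Submodule.span ℂ {M | ∃ σ τ π ρ : Equiv.Perm (Fin p),
    M = VL d p σ * VR d p τ * Qop d p k * (VL d p π * VR d p ρ)}

/-- Labels for the two irreps of `S_2`: symmetric `S` and antisymmetric `A`. -/
inductive SA
  | S
  | A
deriving DecidableEq

instance : Fintype SA := ⟨{SA.S, SA.A}, fun x => by cases x <;> simp⟩

/-- The swap operator on `ℂ^d ⊗ ℂ^d`. -/
noncomputable def Fsw (d : ℕ) : Matrix (Conf d 2) (Conf d 2) ℂ :=
  Matrix.of fun x u => if x 0 = u 1 ∧ x 1 = u 0 then 1 else 0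

/-- Symmetric and antisymmetric projectors on `ℂ^d ⊗ ℂ^d`. -/
noncomputable def Esm (d : ℕ) : SA → Matrix (Conf d 2) (Conf d 2) ℂ
  | SA.S => (2 : ℂ)⁻¹ • (1 + Fsw d)
  | SA.A => (2 : ℂ)⁻¹ • (1 - Fsw d)

/-- `E_i ⊗ E_j` on `H = (ℂ^d)^{⊗4}`. -/
noncomputable def EE (d : ℕ) (i j : SA) : Op d 2 := (Esm d i) ⊗ₖ (Esm d j)

/-- `E_i ⊗ 1` on `H = (ℂ^d)^{⊗4}`. -/
noncomputable def EId (d : ℕ) (i : SA) : Op d 2 :=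
  (Esm d i) ⊗ₖ (1 : Matrix (Conf d 2) (Conf d 2) ℂ)

/-- Multiplicities `m_S = d(d+1)/2`, `m_A = d(d-1)/2` (real valued). -/
noncomputable def mR (d : ℕ) : SA → ℝ
  | SA.S => (d : ℝ) * ((d : ℝ) + 1) / 2
  | SA.A => (d : ℝ) * ((d : ℝ) - 1) / 2

/-- Multiplicities `m_S = d(d+1)/2`, `m_A = d(d-1)/2` (complex valued). -/
noncomputable def mC (d : ℕ) : SA → ℂ
  | SA.S => (d : ℂ) * ((d : ℂ) + 1) / 2
  | SA.A => (d : ℂ) * ((d : ℂ) - 1) / 2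

/-- `V^(1) = d • P⁺_{2,2'}` for `p = 2`. -/
noncomputable def V1 (d : ℕ) : Op d 2 := arc d 2 1 1

/-- `V^(2) = d² • P⁺_{2,2'} P⁺_{1,1'}` for `p = 2`. -/
noncomputable def V2 (d : ℕ) : Op d 2 := arc d 2 1 1 * arc d 2 0 0

/-- `Q^(2) = d^{-2} V^(2)` for `p = 2`. -/
noncomputable def Q2 (d : ℕ) : Op d 2 := ((d : ℂ) ^ 2)⁻¹ • V2 d

/-- `Q^(1) = d^{-1} V^(1) - d^{-2} V^(2)` for `p = 2`. -/
noncomputable def Q1 (d : ℕ) : Op d 2 :=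
  (d : ℂ)⁻¹ • V1 d - ((d : ℂ) ^ 2)⁻¹ • V2 d

/-- `G^(2)_{kl} = (d²/√(m_k m_l)) (E_k ⊗ 1) Q^(2) (E_l ⊗ 1)`. -/
noncomputable def G2 (d : ℕ) (k l : SA) : Op d 2 :=
  ((d : ℂ) ^ 2 / ((Real.sqrt (mR d k * mR d l) : ℝ) : ℂ)) • (EId d k * Q2 d * EId d l)

/-- `G^(2) = G^(2)_{SS} + G^(2)_{AA}`. -/
noncomputable def G2sum (d : ℕ) : Op d 2 := G2 d SA.S SA.S + G2 d SA.A SA.A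

/-- The Gram coefficients `b_{SS} = (d+2)/(4d)`, `b_{SA} = b_{AS} = 1/4`,
`b_{AA} = (d-2)/(4d)`. -/
noncomputable def bc (d : ℕ) : SA → SA → ℂ
  | SA.S, SA.S => ((d : ℂ) + 2) / (4 * (d : ℂ))
  | SA.S, SA.A => 1 / 4
  | SA.A, SA.S => 1 / 4
  | SA.A, SA.A => ((d : ℂ) - 2) / (4 * (d : ℂ))

/-- `Ĝ^(1)_{[ij][kl]} = (E_i ⊗ E_j) Q^(1) (E_k ⊗ E_l)`. -/
noncomputable def Ghat1 (d : ℕ) (i j k l : SA) : Op d 2 :=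
  EE d i j * Q1 d * EE d k l

/-- `G^(1)_{[ij][kl]} = b_{ij}⁻¹ Ĝ^(1)_{[ij][kl]}`. -/
noncomputable def G1 (d : ℕ) (i j k l : SA) : Op d 2 := (bc d i j)⁻¹ • Ghat1 d i j k l

/-- `G^(1) = Σ_{ij} G^(1)_{[ij][ij]}`. -/
noncomputable def G1sum (d : ℕ) : Op d 2 := ∑ i : SA, ∑ j : SA, G1 d i j i j

/-- `G^(0)_{ij} = E_i⊗E_j - b_{ij}⁻¹ (E_i⊗E_j)Q^(1)(E_i⊗E_j)
- δ_{ij} (d²/m_i) (E_i⊗1)Q^(2)(E_i⊗1)`. -/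
noncomputable def G0 (d : ℕ) (i j : SA) : Op d 2 :=
  EE d i j - (bc d i j)⁻¹ • (EE d i j * Q1 d * EE d i j) -
    (if i = j then (d : ℂ) ^ 2 / mC d i else 0) • (EId d i * Q2 d * EId d i)

/-! `Q^(1) = P⁺_{2,2'} (1 - P⁺_{1,1'})` is a product of two commuting projections, so
`Q^(1) X Q^(1) = (1 - P⁺_{1,1'}) (P⁺_{2,2'} X P⁺_{2,2'}) (1 - P⁺_{1,1'})`. Write
`E_i ⊗ E_j = ¼ (1 + s_i F + s_j F' + s_i s_j F F')` with signs `s_S = 1`, `s_A = -1`.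
Compressing by `P⁺_{2,2'}` turns each swap `F`, `F'` into `d⁻¹ P⁺_{2,2'}`, while `F F'`
becomes `P⁺_{2,2'} P⁺_{1,1'}`, which the outer factors `1 - P⁺_{1,1'}` annihilate. Hence
`Q^(1) (E_i ⊗ E_j) Q^(1) = ¼ (1 + (s_i + s_j) / d) Q^(1) = b_{ij} Q^(1)`, and the product
rule for the `Ĝ^(1)` follows because the `E_i ⊗ E_j` are mutually orthogonal idempotents. -/

section CommutingProjections

variable {A : Type*} [Ring A] {P R : A}

theorem mul_one_sub_mul_mul_mul_one_sub (h : Commute P R) (X : A) :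
    P * (1 - R) * X * (P * (1 - R)) = (1 - R) * (P * X * P) * (1 - R) := by
  nth_rw 1 [((Commute.one_right P).sub_right h).eq]
  simp only [mul_assoc]

theorem one_sub_mul_mul_one_sub (hR : IsIdempotentElem R) (h : Commute P R) :
    (1 - R) * P * (1 - R) = P * (1 - R) := by
  rw [← ((Commute.one_right P).sub_right h).eq, mul_assoc, hR.one_sub.eq]

theorem one_sub_mul_mul_mul_one_sub_eq_zero (hR : IsIdempotentElem R) (h : Commute P R) :
    (1 - R) * (P * R) * (1 - R) = 0 := by
  rw [h.eq, ← mul_assoc (1 - R), hR.one_sub_mul_self, zero_mul, zero_mul]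

end CommutingProjections

theorem sum_fin_two_arrow {α M : Type*} [Fintype α] [AddCommMonoid M]
    (f : (Fin 2 → α) → M) :
    ∑ w, f w = ∑ a, ∑ b, f ![a, b] := by
  rw [← Fintype.sum_prod_type', ← (piFinTwoEquiv fun _ => α).symm.sum_comp]
  rfl

/- Proved by `simp` rather than `rfl`: as a `rfl`-lemma it would be used by `simp only` as a
`dsimp` lemma, leaving the `Decidable` instances of the surrounding `if`s ill-typed. -/
theorem vec_two_apply_zero {α : Type*} (a b : α) : ![a, b] 0 = a := by simp

theorem vec_two_apply_one {α : Type*} (a b : α) : ![a, b] 1 = b := by simp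

theorem sum_inv_mul_inv (d : ℕ) : ∑ _ : Fin d, ((d : ℂ)⁻¹ * (d : ℂ)⁻¹) = (d : ℂ)⁻¹ := by
  rw [Finset.sum_const, Finset.card_univ, Fintype.card_fin, nsmul_eq_mul, ← mul_assoc]
  rcases eq_or_ne (d : ℂ) 0 with hd | hd
  · simp [hd]
  · rw [mul_inv_cancel₀ hd, one_mul]

section QuasiMultiplication

variable {d : ℕ}

theorem Fsw_mul_self : Fsw d * Fsw d = 1 := by
  ext x u
  simp only [Matrix.mul_apply, Fsw, Matrix.of_apply, Matrix.one_apply, sum_fin_two_arrow,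
    vec_two_apply_zero, vec_two_apply_one, funext_iff, Fin.forall_fin_two, ite_and, mul_ite,
    mul_one, mul_zero, Finset.sum_ite_irrel, Finset.sum_const_zero]
  split_ifs <;> simp_all

theorem Pplus_one_one_apply (x y u v : Conf d 2) :
    Pplus d 2 1 1 (x, y) (u, v) =
      if x 1 = y 1 ∧ u 1 = v 1 ∧ x 0 = u 0 ∧ y 0 = v 0 then (d : ℂ)⁻¹ else 0 := by
  simp [Pplus, Fin.forall_fin_two]

theorem Pplus_zero_zero_apply (x y u v : Conf d 2) :
    Pplus d 2 0 0 (x, y) (u, v) =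
      if x 0 = y 0 ∧ u 0 = v 0 ∧ x 1 = u 1 ∧ y 1 = v 1 then (d : ℂ)⁻¹ else 0 := by
  simp [Pplus, Fin.forall_fin_two]

theorem Pplus_one_one_mul_self : Pplus d 2 1 1 * Pplus d 2 1 1 = Pplus d 2 1 1 := by
  ext ⟨x, y⟩ ⟨u, v⟩
  simp only [Matrix.mul_apply, Fintype.sum_prod_type, Pplus_one_one_apply, sum_fin_two_arrow,
    vec_two_apply_zero, vec_two_apply_one, ite_and, ite_mul, mul_ite, mul_zero, zero_mul,
    Finset.sum_ite_irrel, Finset.sum_const_zero, Finset.sum_ite_eq, Finset.sum_ite_eq',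
    Finset.mem_univ, if_true, sum_inv_mul_inv]
  split_ifs <;> simp_all

theorem Pplus_zero_zero_mul_self : Pplus d 2 0 0 * Pplus d 2 0 0 = Pplus d 2 0 0 := by
  ext ⟨x, y⟩ ⟨u, v⟩
  simp only [Matrix.mul_apply, Fintype.sum_prod_type, Pplus_zero_zero_apply, sum_fin_two_arrow,
    vec_two_apply_zero, vec_two_apply_one, ite_and, ite_mul, mul_ite, mul_zero, zero_mul,
    Finset.sum_ite_irrel, Finset.sum_const_zero, Finset.sum_ite_eq, Finset.sum_ite_eq',
    Finset.mem_univ, if_true, sum_inv_mul_inv]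
  split_ifs <;> simp_all

theorem Pplus_one_one_mul_Pplus_zero_zero_apply (x y u v : Conf d 2) :
    (Pplus d 2 1 1 * Pplus d 2 0 0) (x, y) (u, v) =
      if x 0 = y 0 ∧ x 1 = y 1 ∧ u 0 = v 0 ∧ u 1 = v 1 then ((d : ℂ) ^ 2)⁻¹ else 0 := by
  simp only [Matrix.mul_apply, Fintype.sum_prod_type, Pplus_one_one_apply, Pplus_zero_zero_apply,
    sum_fin_two_arrow, vec_two_apply_zero, vec_two_apply_one, ite_and, ite_mul, mul_ite, mul_zero,
    zero_mul, Finset.sum_ite_irrel, Finset.sum_const_zero, Finset.sum_ite_eq, Finset.sum_ite_eq',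
    Finset.mem_univ, if_true]
  split_ifs <;> simp_all [pow_two]

theorem Pplus_zero_zero_mul_Pplus_one_one_apply (x y u v : Conf d 2) :
    (Pplus d 2 0 0 * Pplus d 2 1 1) (x, y) (u, v) =
      if x 0 = y 0 ∧ x 1 = y 1 ∧ u 0 = v 0 ∧ u 1 = v 1 then ((d : ℂ) ^ 2)⁻¹ else 0 := by
  simp only [Matrix.mul_apply, Fintype.sum_prod_type, Pplus_one_one_apply, Pplus_zero_zero_apply,
    sum_fin_two_arrow, vec_two_apply_zero, vec_two_apply_one, ite_and, ite_mul, mul_ite, mul_zero,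
    zero_mul, Finset.sum_ite_irrel, Finset.sum_const_zero, Finset.sum_ite_eq, Finset.sum_ite_eq',
    Finset.mem_univ, if_true]
  split_ifs <;> simp_all [pow_two]

theorem commute_Pplus_one_one_Pplus_zero_zero : Commute (Pplus d 2 1 1) (Pplus d 2 0 0) := by
  ext ⟨x, y⟩ ⟨u, v⟩
  rw [Pplus_one_one_mul_Pplus_zero_zero_apply, Pplus_zero_zero_mul_Pplus_one_one_apply]

theorem Pplus_one_one_mul_mul_Pplus_one_one_apply (M : Op d 2) (x y u v : Conf d 2) :
    (Pplus d 2 1 1 * M * Pplus d 2 1 1) (x, y) (u, v) =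
      if x 1 = y 1 ∧ u 1 = v 1 then
        ((d : ℂ) ^ 2)⁻¹ * ∑ a, ∑ b, M (![x 0, a], ![y 0, a]) (![u 0, b], ![v 0, b])
      else 0 := by
  simp only [Matrix.mul_apply, Fintype.sum_prod_type, Pplus_one_one_apply, sum_fin_two_arrow,
    vec_two_apply_zero, vec_two_apply_one, ite_and, ite_mul, mul_ite, mul_zero, zero_mul,
    Finset.sum_ite_irrel, Finset.sum_const_zero, Finset.sum_ite_eq, Finset.sum_ite_eq',
    Finset.mem_univ, if_true]
  split_ifs
  · simp only [Finset.sum_mul, Finset.mul_sum, pow_two, mul_inv]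
    rw [Finset.sum_comm]
    ring_nf
  all_goals simp

theorem Pplus_one_one_mul_Fsw_kronecker_one_mul_Pplus_one_one :
    Pplus d 2 1 1 * (Fsw d ⊗ₖ 1) * Pplus d 2 1 1 = (d : ℂ)⁻¹ • Pplus d 2 1 1 := by
  ext ⟨x, y⟩ ⟨u, v⟩
  rw [Pplus_one_one_mul_mul_Pplus_one_one_apply, Matrix.smul_apply, Pplus_one_one_apply]
  simp only [Matrix.kroneckerMap_apply, Fsw, Matrix.of_apply, Matrix.one_apply,
    vec_two_apply_zero, vec_two_apply_one, funext_iff, Fin.forall_fin_two, ite_and, mul_ite,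
    mul_one, mul_zero, Finset.sum_ite_irrel, Finset.sum_const_zero, Finset.sum_ite_eq,
    Finset.mem_univ, if_true]
  split_ifs <;> simp_all [pow_two]

theorem Pplus_one_one_mul_one_kronecker_Fsw_mul_Pplus_one_one :
    Pplus d 2 1 1 * (1 ⊗ₖ Fsw d) * Pplus d 2 1 1 = (d : ℂ)⁻¹ • Pplus d 2 1 1 := by
  ext ⟨x, y⟩ ⟨u, v⟩
  rw [Pplus_one_one_mul_mul_Pplus_one_one_apply, Matrix.smul_apply, Pplus_one_one_apply]
  simp only [Matrix.kroneckerMap_apply, Fsw, Matrix.of_apply, Matrix.one_apply,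
    vec_two_apply_zero, vec_two_apply_one, funext_iff, Fin.forall_fin_two, ite_and, mul_ite,
    mul_one, mul_zero, Finset.sum_ite_eq, Finset.sum_ite_eq', Finset.mem_univ, if_true]
  split_ifs <;> simp_all [pow_two]

theorem Pplus_one_one_mul_Fsw_kronecker_Fsw_mul_Pplus_one_one :
    Pplus d 2 1 1 * (Fsw d ⊗ₖ Fsw d) * Pplus d 2 1 1 = Pplus d 2 1 1 * Pplus d 2 0 0 := by
  ext ⟨x, y⟩ ⟨u, v⟩
  rw [Pplus_one_one_mul_mul_Pplus_one_one_apply, Pplus_one_one_mul_Pplus_zero_zero_apply]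
  simp only [Matrix.kroneckerMap_apply, Fsw, Matrix.of_apply, vec_two_apply_zero,
    vec_two_apply_one, ite_and, mul_ite, mul_one, mul_zero, Finset.sum_ite_eq,
    Finset.sum_ite_eq', Finset.mem_univ, if_true]
  split_ifs <;> simp_all [pow_two]

theorem Q1_eq (hd : (d : ℂ) ≠ 0) : Q1 d = Pplus d 2 1 1 * (1 - Pplus d 2 0 0) := by
  rw [Q1, V1, V2, arc, arc, smul_mul_smul_comm, smul_smul, smul_smul, mul_sub, mul_one,
    inv_mul_cancel₀ hd, ← sq, inv_mul_cancel₀ (pow_ne_zero 2 hd), one_smul, one_smul]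

theorem Q1_mul_mul_Q1 (hd : (d : ℂ) ≠ 0) (X : Op d 2) :
    Q1 d * X * Q1 d =
      (1 - Pplus d 2 0 0) * (Pplus d 2 1 1 * X * Pplus d 2 1 1) * (1 - Pplus d 2 0 0) := by
  rw [Q1_eq hd]
  exact mul_one_sub_mul_mul_mul_one_sub commute_Pplus_one_one_Pplus_zero_zero X

theorem Q1_mul_self (hd : (d : ℂ) ≠ 0) : Q1 d * Q1 d = Q1 d := by
  simpa only [mul_one, Pplus_one_one_mul_self, one_sub_mul_mul_one_sub Pplus_zero_zero_mul_self
    commute_Pplus_one_one_Pplus_zero_zero, ← Q1_eq hd] using Q1_mul_mul_Q1 hd 1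

theorem Q1_mul_Fsw_kronecker_one_mul_Q1 (hd : (d : ℂ) ≠ 0) :
    Q1 d * (Fsw d ⊗ₖ 1) * Q1 d = (d : ℂ)⁻¹ • Q1 d := by
  rw [Q1_mul_mul_Q1 hd, Pplus_one_one_mul_Fsw_kronecker_one_mul_Pplus_one_one, mul_smul_comm,
    smul_mul_assoc, one_sub_mul_mul_one_sub Pplus_zero_zero_mul_self
    commute_Pplus_one_one_Pplus_zero_zero, ← Q1_eq hd]

theorem Q1_mul_one_kronecker_Fsw_mul_Q1 (hd : (d : ℂ) ≠ 0) :
    Q1 d * (1 ⊗ₖ Fsw d) * Q1 d = (d : ℂ)⁻¹ • Q1 d := by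
  rw [Q1_mul_mul_Q1 hd, Pplus_one_one_mul_one_kronecker_Fsw_mul_Pplus_one_one, mul_smul_comm,
    smul_mul_assoc, one_sub_mul_mul_one_sub Pplus_zero_zero_mul_self
    commute_Pplus_one_one_Pplus_zero_zero, ← Q1_eq hd]

theorem Q1_mul_Fsw_kronecker_Fsw_mul_Q1 (hd : (d : ℂ) ≠ 0) :
    Q1 d * (Fsw d ⊗ₖ Fsw d) * Q1 d = 0 := by
  rw [Q1_mul_mul_Q1 hd, Pplus_one_one_mul_Fsw_kronecker_Fsw_mul_Pplus_one_one,
    one_sub_mul_mul_mul_one_sub_eq_zero Pplus_zero_zero_mul_self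
    commute_Pplus_one_one_Pplus_zero_zero]

def SA.sign : SA → ℂ
  | SA.S => 1
  | SA.A => -1

theorem Esm_eq (i : SA) : Esm d i = (2 : ℂ)⁻¹ • (1 + i.sign • Fsw d) := by
  cases i <;> simp [Esm, SA.sign, sub_eq_add_neg]

theorem Esm_mul_Esm (i k : SA) : Esm d i * Esm d k = if i = k then Esm d i else 0 := by
  simp only [Esm_eq, smul_mul_smul_comm, add_mul, mul_add, mul_one, one_mul, Fsw_mul_self]
  cases i <;> cases k <;> simp only [SA.sign, reduceCtorEq, if_true, if_false] <;> module

theorem EE_mul_EE (i j k l : SA) :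
    EE d i j * EE d k l = if i = k ∧ j = l then EE d i j else 0 := by
  simp only [EE, ← Matrix.mul_kronecker_mul, Esm_mul_Esm]
  by_cases hik : i = k <;> by_cases hjl : j = l <;> simp [hik, hjl]

theorem EE_eq (i j : SA) :
    EE d i j = (4 : ℂ)⁻¹ • (1 + i.sign • (Fsw d ⊗ₖ 1) + j.sign • (1 ⊗ₖ Fsw d) +
      (i.sign * j.sign) • (Fsw d ⊗ₖ Fsw d)) := by
  simp only [EE, Esm_eq, Matrix.smul_kronecker, Matrix.kronecker_smul, Matrix.add_kronecker,
    Matrix.kronecker_add, Matrix.one_kronecker_one, smul_smul, smul_add]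
  module

theorem bc_eq (hd : (d : ℂ) ≠ 0) (i j : SA) :
    bc d i j = 4⁻¹ * (1 + (i.sign + j.sign) / d) := by
  cases i <;> cases j <;> simp only [bc, SA.sign] <;> field_simp <;> ring

theorem Q1_mul_EE_mul_Q1 (hd : (d : ℂ) ≠ 0) (i j : SA) :
    Q1 d * EE d i j * Q1 d = bc d i j • Q1 d := by
  simp only [EE_eq, bc_eq hd, mul_smul_comm, smul_mul_assoc, mul_add, add_mul, mul_one,
    Q1_mul_self hd, Q1_mul_Fsw_kronecker_one_mul_Q1 hd, Q1_mul_one_kronecker_Fsw_mul_Q1 hd,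
    Q1_mul_Fsw_kronecker_Fsw_mul_Q1 hd, smul_zero, add_zero]
  module

theorem Ghat1_mul_Ghat1 (hd : (d : ℂ) ≠ 0) (a b i j k l u v : SA) :
    Ghat1 d a b i j * Ghat1 d k l u v =
      (if i = k ∧ j = l then bc d i j else 0) • Ghat1 d a b u v := by
  have regroup : Ghat1 d a b i j * Ghat1 d k l u v =
      EE d a b * (Q1 d * (EE d i j * EE d k l) * Q1 d) * EE d u v := by
    simp only [Ghat1, mul_assoc]
  rw [regroup, EE_mul_EE]
  split_ifs
  · rw [Q1_mul_EE_mul_Q1 hd, mul_smul_comm, smul_mul_assoc, Ghat1, mul_assoc]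
  · simp

end QuasiMultiplication

/-- quasi-matrix multiplication in `M̃^(1)`:
`Ĝ^(1)_{[ab][ij]} Ĝ^(1)_{[kl][pq]} = δ_{ik} δ_{jl} b_{ij} Ĝ^(1)_{[ab][pq]}`;
equivalently `Q^(1) (E_i⊗E_j) Q^(1) = b_{ij} Q^(1)`. -/
theorem Ghat1_quasi_multiplication (d : ℕ) (hd : 2 ≤ d) :
    (∀ a b i j k l u v : SA,
      Ghat1 d a b i j * Ghat1 d k l u v =
        (if i = k ∧ j = l then bc d i j else 0) • Ghat1 d a b u v) ∧
    (∀ i j : SA, Q1 d * EE d i j * Q1 d = bc d i j • Q1 d) := by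
  have hd0 : (d : ℂ) ≠ 0 := Nat.cast_ne_zero.mpr (by omega)
  exact ⟨Ghat1_mul_Ghat1 hd0, Q1_mul_EE_mul_Q1 hd0⟩

end WBA
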